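/- Under the perturbed preconditioned Cholesky-QR model, if κ(A₁)²γ₂ < 1 where γ₂ ≡ 2ε_F + ε_F² + (1+ε_F)²(ε₁ + (1+ε₁)ε₂) and ε_F ≡ (ε_A + ε_s)κ(R_s), and if Ĝ₁ + E₂ = R̂₂ᵀR̂₂ with R̂₂ ∈ ℝ^{n×n}, then R̂₂ is nonsingular, ‖R̂₂‖₂² ≤ ‖A₁‖₂²(1+γ₂), ‖R̂₂⁻¹‖₂² ≤ ‖A₁†‖₂²/(1 − κ(A₁)²γ₂), and κ(R̂₂) ≤ κ(A₁) · sqrt((1+γ₂)/(1 − κ(A₁)²γ₂)). -/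

import Mathlib

open Matrix

/-- Spectral (two-)norm of a real matrix. -/
noncomputable def spec {m n : ℕ} (M : Matrix (Fin m) (Fin n) ℝ) : ℝ :=
  ‖LinearMap.toContinuousLinearMap (Matrix.toEuclideanLin M)‖

/-- Singular values of a real `m × n` matrix, in decreasing order:
`singularValues M i` is `σ_{i+1}(M)` (0-based). -/
noncomputable def singularValues {m n : ℕ} (M : Matrix (Fin m) (Fin n) ℝ) : Fin n → ℝ :=
  fun i =>
    Real.sqrt (((show (Mᵀ * M).IsHermitian by
        simpa using Matrix.isHermitian_conjTranspose_mul_self M).eigenvalues ∘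
      ⇑(Tuple.sort (show (Mᵀ * M).IsHermitian by
        simpa using Matrix.isHermitian_conjTranspose_mul_self M).eigenvalues)) i.rev)

/-- Two-norm condition number `κ(M) = σ₁(M)/σₙ(M)`. -/
noncomputable def kappa {m n : ℕ} (M : Matrix (Fin m) (Fin n) ℝ) : ℝ :=
  if h : 0 < n then
    singularValues M ⟨0, h⟩ / singularValues M ⟨n - 1, Nat.sub_lt h Nat.one_pos⟩
  else 1

/-- Smallest singular value `σₙ(M)`. -/
noncomputable def sigmaMin {m n : ℕ} (M : Matrix (Fin m) (Fin n) ℝ) : ℝ :=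
  if h : 0 < n then singularValues M ⟨n - 1, Nat.sub_lt h Nat.one_pos⟩ else 1

/-- Eigenvalues of a real symmetric matrix in decreasing order:
`symmEigs M j` is `λ_{j+1}(M)` (0-based). -/
noncomputable def symmEigs {n : ℕ} (M : Matrix (Fin n) (Fin n) ℝ) : Fin n → ℝ :=
  fun j =>
    if h : M.IsHermitian then (h.eigenvalues ∘ ⇑(Tuple.sort h.eigenvalues)) j.rev else 0

/-! Write `Ahat = A₁ + F` with `F = (E + Es) Rs⁻¹`, so that `‖F‖ ≤ εF ‖A₁‖`. Then
`R̂₂ᵀR̂₂ - A₁ᵀA₁ = A₁ᵀF + FᵀA₁ + FᵀF + E₁ + E₂`, whose norm is at most `γ₂ ‖A₁‖²`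
by the triangle inequality. Consequently `‖R̂₂‖² = ‖R̂₂ᵀR̂₂‖ ≤ ‖A₁‖² (1 + γ₂)`, and the
quadratic forms `‖R̂₂ x‖²` and `‖A₁ x‖² ≥ σₙ(A₁)² ‖x‖²` differ by at most
`γ₂ ‖A₁‖² ‖x‖² = κ(A₁)² γ₂ σₙ(A₁)² ‖x‖²`, so `‖R̂₂ x‖² ≥ σₙ(A₁)² (1 - κ(A₁)² γ₂) ‖x‖²`.
This lower bound makes `R̂₂` injective and bounds both `‖R̂₂⁻¹‖` and `σₙ(R̂₂)`. Singular values
are compared with `‖M x‖` through the eigendecomposition of `MᵀM`. -/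

open scoped Matrix.Norms.L2Operator InnerProductSpace

lemma spec_eq_norm {m n : ℕ} (M : Matrix (Fin m) (Fin n) ℝ) : spec M = ‖M‖ :=
  rfl

namespace Matrix

variable {l m n : Type*} [Fintype l] [Fintype m] [Fintype n] [DecidableEq n]

section L2OpNorm

lemma norm_toEuclideanLin_apply_le (M : Matrix m n ℝ) (x : EuclideanSpace ℝ n) :
    ‖toEuclideanLin M x‖ ≤ ‖M‖ * ‖x‖ :=
  (LinearMap.toContinuousLinearMap (toEuclideanLin M)).le_opNorm x

lemma norm_le_of_forall_norm_toEuclideanLin_le {M : Matrix m n ℝ} {c : ℝ} (hc : 0 ≤ c)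
    (h : ∀ x, ‖toEuclideanLin M x‖ ≤ c * ‖x‖) : ‖M‖ ≤ c :=
  ContinuousLinearMap.opNorm_le_bound _ hc h

lemma inner_toEuclideanLin_transpose_mul_self [DecidableEq m] (M : Matrix m n ℝ)
    (x : EuclideanSpace ℝ n) : ⟪x, toEuclideanLin (Mᵀ * M) x⟫_ℝ = ‖toEuclideanLin M x‖ ^ 2 := by
  rw [← conjTranspose_eq_transpose_of_trivial, toLpLin_mul_same, LinearMap.comp_apply,
    toEuclideanLin_conjTranspose_eq_adjoint, LinearMap.adjoint_inner_right,
    real_inner_self_eq_norm_sq]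

lemma l2_opNorm_transpose_mul_self [DecidableEq m] (M : Matrix m n ℝ) : ‖Mᵀ * M‖ = ‖M‖ ^ 2 := by
  rw [← conjTranspose_eq_transpose_of_trivial, l2_opNorm_conjTranspose_mul_self, sq]

lemma l2_opNorm_transpose [DecidableEq m] (M : Matrix m n ℝ) : ‖Mᵀ‖ = ‖M‖ := by
  rw [← conjTranspose_eq_transpose_of_trivial, l2_opNorm_conjTranspose]

end L2OpNorm

namespace IsHermitian

variable {H : Matrix n n ℝ}

lemma toEuclideanLin_eigenvectorBasis (hH : H.IsHermitian) (i : n) :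
    toEuclideanLin H (hH.eigenvectorBasis i) = hH.eigenvalues i • hH.eigenvectorBasis i := by
  rw [toLpLin_apply, hH.mulVec_eigenvectorBasis]
  rfl

lemma inner_toEuclideanLin_self (hH : H.IsHermitian) (x : EuclideanSpace ℝ n) :
    ⟪x, toEuclideanLin H x⟫_ℝ = ∑ i, hH.eigenvalues i * ⟪hH.eigenvectorBasis i, x⟫_ℝ ^ 2 := by
  have hsymm : (toEuclideanLin H).IsSymmetric := isSymmetric_toEuclideanLin_iff.mpr hH
  rw [← hH.eigenvectorBasis.sum_inner_mul_inner]
  refine Finset.sum_congr rfl fun i _ => ?_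
  rw [← hsymm, toEuclideanLin_eigenvectorBasis, real_inner_smul_left, real_inner_comm]
  ring

end IsHermitian

omit [Fintype n] [DecidableEq n] in
lemma isHermitian_transpose_mul_self (M : Matrix m n ℝ) :
    (Mᵀ * M).IsHermitian := by
  simpa using isHermitian_conjTranspose_mul_self M

section Gram

variable [DecidableEq m]

lemma eigenvalues_transpose_mul_self_eq (M : Matrix m n ℝ) (hG : (Mᵀ * M).IsHermitian) (i : n) :
    hG.eigenvalues i = ‖toEuclideanLin M (hG.eigenvectorBasis i)‖ ^ 2 := by
  rw [← inner_toEuclideanLin_transpose_mul_self, hG.toEuclideanLin_eigenvectorBasis,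
    real_inner_smul_right, real_inner_self_eq_norm_sq, hG.eigenvectorBasis.orthonormal.1 i]
  ring

lemma norm_sq_toEuclideanLin_eq_sum (M : Matrix m n ℝ) (hG : (Mᵀ * M).IsHermitian)
    (x : EuclideanSpace ℝ n) :
    ‖toEuclideanLin M x‖ ^ 2 = ∑ i, hG.eigenvalues i * ⟪hG.eigenvectorBasis i, x⟫_ℝ ^ 2 := by
  rw [← inner_toEuclideanLin_transpose_mul_self, hG.inner_toEuclideanLin_self]

end Gram

omit [Fintype m] [DecidableEq n] in
lemma mulVec_injective_of_rank_eq {M : Matrix m n ℝ} (hM : M.rank = Fintype.card n) :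
    Function.Injective M.mulVec := by
  have hker : Module.finrank ℝ (LinearMap.ker M.mulVecLin) = 0 := by
    have := LinearMap.finrank_range_add_finrank_ker M.mulVecLin
    rw [Module.finrank_fintype_fun_eq_card] at this
    unfold rank at hM
    omega
  rw [← coe_mulVecLin, ← LinearMap.ker_eq_bot, ← Submodule.finrank_eq_zero, hker]

lemma norm_sq_le_of_forall_norm_sq_le {M : Matrix m n ℝ} {c : ℝ} (hc : 0 ≤ c)
    (h : ∀ x, ‖toEuclideanLin M x‖ ^ 2 ≤ c * ‖x‖ ^ 2) : ‖M‖ ^ 2 ≤ c := by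
  have hle : ‖M‖ ≤ √c := norm_le_of_forall_norm_toEuclideanLin_le (Real.sqrt_nonneg c) fun x =>
    (pow_le_pow_iff_left₀ (norm_nonneg _) (by positivity) two_ne_zero).mp <| by
      rw [mul_pow, Real.sq_sqrt hc]; exact h x
  simpa [Real.sq_sqrt hc] using pow_le_pow_left₀ (norm_nonneg M) hle 2

section BoundedBelow

variable {R : Matrix n n ℝ} {c : ℝ}

lemma isUnit_det_of_forall_mul_norm_sq_le (hc : 0 < c)
    (h : ∀ x, c * ‖x‖ ^ 2 ≤ ‖toEuclideanLin R x‖ ^ 2) : IsUnit R.det := by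
  rw [← isUnit_iff_isUnit_det, ← mulVec_injective_iff_isUnit]
  intro v w hvw
  have hx := h (WithLp.toLp 2 (v - w))
  rw [toLpLin_toLp, toLin'_apply, mulVec_sub, hvw, sub_self, WithLp.toLp_zero, norm_zero] at hx
  have h0 : ‖WithLp.toLp 2 (v - w)‖ ^ 2 ≤ 0 := by nlinarith
  simpa [sub_eq_zero] using h0

lemma norm_inv_sq_le_of_forall_mul_norm_sq_le (hc : 0 < c)
    (h : ∀ x, c * ‖x‖ ^ 2 ≤ ‖toEuclideanLin R x‖ ^ 2) : ‖R⁻¹‖ ^ 2 ≤ c⁻¹ := by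
  have hR : R * R⁻¹ = 1 := mul_nonsing_inv R (isUnit_det_of_forall_mul_norm_sq_le hc h)
  refine norm_sq_le_of_forall_norm_sq_le (inv_nonneg.mpr hc.le) fun y => ?_
  have hy := h (toEuclideanLin R⁻¹ y)
  rw [← LinearMap.comp_apply, ← toLpLin_mul_same, hR, toLpLin_one, LinearMap.id_apply] at hy
  rw [inv_mul_eq_div, le_div_iff₀' hc]
  exact hy

end BoundedBelow

section GramPerturbation

variable [DecidableEq l] [DecidableEq m] {A : Matrix m n ℝ} {R : Matrix l n ℝ} {δ : ℝ}

lemma norm_sq_le_of_norm_gram_sub_le (h : ‖Rᵀ * R - Aᵀ * A‖ ≤ δ) : ‖R‖ ^ 2 ≤ ‖A‖ ^ 2 + δ := by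
  rw [← l2_opNorm_transpose_mul_self, ← l2_opNorm_transpose_mul_self]
  linarith [norm_sub_norm_le (Rᵀ * R) (Aᵀ * A)]

lemma norm_sq_sub_le_of_norm_gram_sub_le (h : ‖Rᵀ * R - Aᵀ * A‖ ≤ δ) (x : EuclideanSpace ℝ n) :
    ‖toEuclideanLin A x‖ ^ 2 - δ * ‖x‖ ^ 2 ≤ ‖toEuclideanLin R x‖ ^ 2 := by
  set Δ := Rᵀ * R - Aᵀ * A
  have hquad : ⟪x, toEuclideanLin Δ x⟫_ℝ = ‖toEuclideanLin R x‖ ^ 2 - ‖toEuclideanLin A x‖ ^ 2 := by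
    rw [map_sub, LinearMap.sub_apply, inner_sub_right, inner_toEuclideanLin_transpose_mul_self,
      inner_toEuclideanLin_transpose_mul_self]
  have hbound : |⟪x, toEuclideanLin Δ x⟫_ℝ| ≤ δ * ‖x‖ ^ 2 :=
    calc |⟪x, toEuclideanLin Δ x⟫_ℝ| ≤ ‖x‖ * ‖toEuclideanLin Δ x‖ := abs_real_inner_le_norm _ _
      _ ≤ ‖x‖ * (‖Δ‖ * ‖x‖) :=
        mul_le_mul_of_nonneg_left (norm_toEuclideanLin_apply_le Δ x) (norm_nonneg x)
      _ ≤ δ * ‖x‖ ^ 2 := by nlinarith [norm_nonneg x]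
  linarith [neg_abs_le ⟪x, toEuclideanLin Δ x⟫_ℝ]

end GramPerturbation

section Perturbation

variable [DecidableEq m]

lemma norm_gram_sub_le_of_perturbation {A₁ F : Matrix m n ℝ} {E₁ E₂ : Matrix n n ℝ}
    {εF ε₁ ε₂ : ℝ} (hε₁ : 0 ≤ ε₁) (hε₂ : 0 ≤ ε₂) (hF : ‖F‖ ≤ εF * ‖A₁‖)
    (hE₁ : ‖E₁‖ ≤ ε₁ * ‖A₁ + F‖ ^ 2) (hE₂ : ‖E₂‖ ≤ ε₂ * ‖(A₁ + F)ᵀ * (A₁ + F) + E₁‖) :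
    ‖(A₁ + F)ᵀ * (A₁ + F) + E₁ + E₂ - A₁ᵀ * A₁‖ ≤
      (2 * εF + εF ^ 2 + (1 + εF) ^ 2 * (ε₁ + (1 + ε₁) * ε₂)) * ‖A₁‖ ^ 2 := by
  set S := ‖A₁‖
  have hAhat : ‖A₁ + F‖ ≤ (1 + εF) * S := by linarith [norm_add_le A₁ F]
  have hAhat2 : ‖A₁ + F‖ ^ 2 ≤ (1 + εF) ^ 2 * S ^ 2 := by
    rw [← mul_pow]; exact pow_le_pow_left₀ (norm_nonneg _) hAhat 2
  have hE₁' : ‖E₁‖ ≤ ε₁ * ((1 + εF) ^ 2 * S ^ 2) := hE₁.trans (by gcongr)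
  have hG : ‖(A₁ + F)ᵀ * (A₁ + F) + E₁‖ ≤ (1 + ε₁) * ((1 + εF) ^ 2 * S ^ 2) := by
    linarith [norm_add_le ((A₁ + F)ᵀ * (A₁ + F)) E₁, l2_opNorm_transpose_mul_self (A₁ + F)]
  have hE₂' : ‖E₂‖ ≤ ε₂ * ((1 + ε₁) * ((1 + εF) ^ 2 * S ^ 2)) := hE₂.trans (by gcongr)
  have hcross : ‖A₁ᵀ * F‖ ≤ S * (εF * S) :=
    (l2_opNorm_mul _ _).trans (by rw [l2_opNorm_transpose]; gcongr)
  have hcross' : ‖Fᵀ * A₁‖ ≤ εF * S * S :=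
    (l2_opNorm_mul _ _).trans (by rw [l2_opNorm_transpose]; gcongr)
  have hquad : ‖Fᵀ * F‖ ≤ (εF * S) ^ 2 := by
    rw [l2_opNorm_transpose_mul_self]; gcongr
  have hexpand : (A₁ + F)ᵀ * (A₁ + F) + E₁ + E₂ - A₁ᵀ * A₁ =
      A₁ᵀ * F + Fᵀ * A₁ + Fᵀ * F + E₁ + E₂ := by
    simp only [transpose_add, Matrix.add_mul, Matrix.mul_add]; abel
  rw [hexpand]
  calc ‖A₁ᵀ * F + Fᵀ * A₁ + Fᵀ * F + E₁ + E₂‖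
      ≤ ‖A₁ᵀ * F‖ + ‖Fᵀ * A₁‖ + ‖Fᵀ * F‖ + ‖E₁‖ + ‖E₂‖ :=
        (norm_add_le _ _).trans (add_le_add_left norm_add₄_le _)
    _ ≤ _ := by linear_combination hcross + hcross' + hquad + hE₁' + hE₂'

omit [DecidableEq m] in
lemma norm_add_mul_inv_le_of_relative_errors {A E Es A₁ : Matrix m n ℝ} {Rs : Matrix n n ℝ}
    {εA εs : ℝ} (hA : A = A₁ * Rs) (hA0 : A ≠ 0) (hA₁Rs : ‖A₁‖ * ‖Rs‖ ≠ 0)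
    (hεA : εA = ‖E‖ / ‖A‖) (hεs : εs = ‖Es‖ / (‖A₁‖ * ‖Rs‖)) :
    ‖(E + Es) * Rs⁻¹‖ ≤ (εA + εs) * (‖Rs‖ * ‖Rs⁻¹‖) * ‖A₁‖ := by
  have hE : ‖E‖ ≤ εA * (‖A₁‖ * ‖Rs‖) := by
    rw [hεA, div_mul_eq_mul_div, le_div_iff₀ (norm_pos_iff.mpr hA0)]
    exact mul_le_mul_of_nonneg_left (hA ▸ l2_opNorm_mul A₁ Rs) (norm_nonneg E)
  have hEs : ‖Es‖ = εs * (‖A₁‖ * ‖Rs‖) := by rw [hεs, div_mul_cancel₀ _ hA₁Rs]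
  calc ‖(E + Es) * Rs⁻¹‖ ≤ (‖E‖ + ‖Es‖) * ‖Rs⁻¹‖ :=
        (l2_opNorm_mul _ _).trans (by gcongr; exact norm_add_le E Es)
    _ ≤ (εA + εs) * (‖Rs‖ * ‖Rs⁻¹‖) * ‖A₁‖ := by
        nlinarith [norm_nonneg Rs⁻¹]

lemma norm_gram_sub_le_of_perturbed_cholQR {A E Es A₁ Ahat : Matrix m n ℝ}
    {Rs E₁ E₂ Ghat Rhat : Matrix n n ℝ} {εA εs εF ε₁ ε₂ γ : ℝ}
    (hA₁0 : A₁ ≠ 0) (hRs : IsUnit Rs.det) (hA₁ : A₁ = A * Rs⁻¹)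
    (hAhat : Ahat = ((A + E) + Es) * Rs⁻¹) (hGhat : Ghat = Ahatᵀ * Ahat + E₁)
    (hεA : εA = ‖E‖ / ‖A‖) (hεs : εs = ‖Es‖ / (‖A₁‖ * ‖Rs‖))
    (hεF : εF = (εA + εs) * (‖Rs‖ * ‖Rs⁻¹‖)) (hε₁ : ε₁ = ‖E₁‖ / ‖Ahat‖ ^ 2)
    (hε₂ : ε₂ = ‖E₂‖ / ‖Ghat‖)
    (hγ : γ = 2 * εF + εF ^ 2 + (1 + εF) ^ 2 * (ε₁ + (1 + ε₁) * ε₂)) (hγ₁ : γ < 1)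
    (hchol : Ghat + E₂ = Rhatᵀ * Rhat) :
    ‖Rhatᵀ * Rhat - A₁ᵀ * A₁‖ ≤ γ * ‖A₁‖ ^ 2 := by
  have hA : A = A₁ * Rs := by
    rw [hA₁, Matrix.mul_assoc, nonsing_inv_mul Rs hRs, Matrix.mul_one]
  have hA0 : A ≠ 0 := by rintro rfl; exact hA₁0 (by rw [hA₁, Matrix.zero_mul])
  have hRs0 : Rs ≠ 0 := by rintro rfl; exact hA0 (by rw [hA, Matrix.mul_zero])
  set F := (E + Es) * Rs⁻¹
  have hAhatF : Ahat = A₁ + F := by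
    rw [hAhat, hA₁, ← Matrix.add_mul, add_assoc]
  have hA₁pos : 0 < ‖A₁‖ := norm_pos_iff.mpr hA₁0
  have hF : ‖F‖ ≤ εF * ‖A₁‖ :=
    hεF ▸ norm_add_mul_inv_le_of_relative_errors hA hA0 (by positivity) hεA hεs
  have hεF0 : 0 ≤ εF := by rw [hεF, hεA, hεs]; positivity
  have hε₁0 : 0 ≤ ε₁ := by rw [hε₁]; positivity
  have hε₂0 : 0 ≤ ε₂ := by rw [hε₂]; positivity
  -- `γ < 1` forces `εF < 1` and `ε₁ < 1`, so neither `Ahat` nor `Ghat` vanishes and the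
  -- quotients defining `ε₁` and `ε₂` can be cleared.
  have hsplit : 2 * εF + ε₁ ≤ γ := by
    rw [hγ]
    nlinarith [mul_nonneg hεF0 hε₁0, mul_nonneg (sq_nonneg (1 + εF)) (mul_nonneg hε₁0 hε₂0),
      mul_nonneg (sq_nonneg (1 + εF)) hε₂0]
  have hAhat0 : 0 < ‖Ahat‖ := by
    have := norm_sub_le (A₁ + F) F
    rw [add_sub_cancel_right, ← hAhatF] at this
    nlinarith
  have hE₁ : ‖E₁‖ = ε₁ * ‖Ahat‖ ^ 2 := by rw [hε₁, div_mul_cancel₀ _ (by positivity)]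
  have hGhat0 : 0 < ‖Ghat‖ := by
    have := norm_sub_le Ghat E₁
    rw [hGhat, add_sub_cancel_right, l2_opNorm_transpose_mul_self, ← hGhat] at this
    nlinarith [mul_pos (by linarith : 0 < 1 - ε₁) (pow_pos hAhat0 2)]
  have hE₂ : ‖E₂‖ = ε₂ * ‖Ghat‖ := by rw [hε₂, div_mul_cancel₀ _ hGhat0.ne']
  rw [← hchol, hGhat, hAhatF, hγ]
  rw [hAhatF] at hE₁
  rw [hGhat, hAhatF] at hE₂
  exact norm_gram_sub_le_of_perturbation hε₁0 hε₂0 hF hE₁.le hE₂.le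

end Perturbation

end Matrix

section SingularValues

open Matrix

variable {m n : ℕ} (M : Matrix (Fin m) (Fin n) ℝ)

lemma singularValues_eq (hG : (Mᵀ * M).IsHermitian) (i : Fin n) :
    singularValues M i = √((hG.eigenvalues ∘ ⇑(Tuple.sort hG.eigenvalues)) i.rev) :=
  rfl

lemma singularValues_nonneg (i : Fin n) : 0 ≤ singularValues M i :=
  Real.sqrt_nonneg _

lemma singularValues_antitone : Antitone (singularValues M) := fun _ _ hij =>
  Real.sqrt_le_sqrt (Tuple.monotone_sort _ (Fin.rev_le_rev.mpr hij))

lemma exists_singularValues_sq_eq_eigenvalues (hG : (Mᵀ * M).IsHermitian) (i : Fin n) :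
    ∃ j, singularValues M j ^ 2 = hG.eigenvalues i := by
  refine ⟨((Tuple.sort hG.eigenvalues).symm i).rev, ?_⟩
  rw [singularValues_eq M hG, Real.sq_sqrt] <;>
    simp [eigenvalues_transpose_mul_self_eq M hG]

lemma exists_eigenvalues_eq_singularValues_sq (hG : (Mᵀ * M).IsHermitian) (j : Fin n) :
    ∃ i, hG.eigenvalues i = singularValues M j ^ 2 := by
  refine ⟨Tuple.sort hG.eigenvalues j.rev, ?_⟩
  rw [singularValues_eq M hG, Real.sq_sqrt] <;>
    simp [eigenvalues_transpose_mul_self_eq M hG]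

lemma mul_norm_sq_le_of_le_singularValues_sq {c : ℝ} (hc : ∀ j, c ≤ singularValues M j ^ 2)
    (x : EuclideanSpace ℝ (Fin n)) : c * ‖x‖ ^ 2 ≤ ‖toEuclideanLin M x‖ ^ 2 := by
  have hG := isHermitian_transpose_mul_self M
  rw [norm_sq_toEuclideanLin_eq_sum M hG, ← hG.eigenvectorBasis.sum_sq_inner_right,
    Finset.mul_sum]
  refine Finset.sum_le_sum fun i _ => ?_
  obtain ⟨j, hj⟩ := exists_singularValues_sq_eq_eigenvalues M hG i
  exact mul_le_mul_of_nonneg_right (hj ▸ hc j) (sq_nonneg _)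

lemma norm_sq_le_of_singularValues_sq_le {c : ℝ} (hc : ∀ j, singularValues M j ^ 2 ≤ c)
    (x : EuclideanSpace ℝ (Fin n)) : ‖toEuclideanLin M x‖ ^ 2 ≤ c * ‖x‖ ^ 2 := by
  have hG := isHermitian_transpose_mul_self M
  rw [norm_sq_toEuclideanLin_eq_sum M hG, ← hG.eigenvectorBasis.sum_sq_inner_right,
    Finset.mul_sum]
  refine Finset.sum_le_sum fun i _ => ?_
  obtain ⟨j, hj⟩ := exists_singularValues_sq_eq_eigenvalues M hG i
  exact mul_le_mul_of_nonneg_right (hj ▸ hc j) (sq_nonneg _)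

lemma exists_norm_eq_singularValues (j : Fin n) :
    ∃ x : EuclideanSpace ℝ (Fin n), ‖x‖ = 1 ∧ ‖toEuclideanLin M x‖ = singularValues M j := by
  have hG := isHermitian_transpose_mul_self M
  obtain ⟨i, hi⟩ := exists_eigenvalues_eq_singularValues_sq M hG j
  refine ⟨hG.eigenvectorBasis i, hG.eigenvectorBasis.orthonormal.1 i, ?_⟩
  rw [eigenvalues_transpose_mul_self_eq M hG] at hi
  exact (pow_left_inj₀ (norm_nonneg _) (singularValues_nonneg M j) two_ne_zero).mp hi

lemma norm_eq_singularValues_zero (hn : 0 < n) : ‖M‖ = singularValues M ⟨0, hn⟩ := by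
  have hσ := singularValues_nonneg M ⟨0, hn⟩
  refine le_antisymm (norm_le_of_forall_norm_toEuclideanLin_le hσ fun x => ?_) ?_
  · refine (pow_le_pow_iff_left₀ (norm_nonneg _) (by positivity) two_ne_zero).mp ?_
    rw [mul_pow]
    refine norm_sq_le_of_singularValues_sq_le M (fun j => ?_) x
    exact pow_le_pow_left₀ (singularValues_nonneg M j)
      (singularValues_antitone M (Fin.le_iff_val_le_val.mpr (Nat.zero_le j))) 2
  · obtain ⟨x, hx, hMx⟩ := exists_norm_eq_singularValues M ⟨0, hn⟩
    simpa [hx, hMx] using norm_toEuclideanLin_apply_le M x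

end SingularValues

section SigmaMin

open Matrix

variable {m n : ℕ} (M : Matrix (Fin m) (Fin n) ℝ)

lemma sigmaMin_eq (hn : 0 < n) :
    sigmaMin M = singularValues M ⟨n - 1, Nat.sub_lt hn Nat.one_pos⟩ :=
  dif_pos hn

lemma kappa_eq_norm_div_sigmaMin (hn : 0 < n) : kappa M = ‖M‖ / sigmaMin M := by
  rw [kappa, dif_pos hn, norm_eq_singularValues_zero M hn, sigmaMin_eq M hn]

lemma sigmaMin_sq_mul_le (hn : 0 < n) (x : EuclideanSpace ℝ (Fin n)) :
    sigmaMin M ^ 2 * ‖x‖ ^ 2 ≤ ‖toEuclideanLin M x‖ ^ 2 := by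
  refine mul_norm_sq_le_of_le_singularValues_sq M (fun j => ?_) x
  rw [sigmaMin_eq M hn]
  exact pow_le_pow_left₀ (singularValues_nonneg M _)
    (singularValues_antitone M (Fin.le_iff_val_le_val.mpr (by simp; omega))) 2

lemma exists_norm_eq_sigmaMin (hn : 0 < n) :
    ∃ x : EuclideanSpace ℝ (Fin n), ‖x‖ = 1 ∧ ‖toEuclideanLin M x‖ = sigmaMin M :=
  sigmaMin_eq M hn ▸ exists_norm_eq_singularValues M _

lemma sigmaMin_le_norm (hn : 0 < n) : sigmaMin M ≤ ‖M‖ := by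
  obtain ⟨x, hx, hMx⟩ := exists_norm_eq_sigmaMin M hn
  simpa [hx, hMx] using norm_toEuclideanLin_apply_le M x

lemma le_sigmaMin_sq_of_forall_mul_norm_sq_le (hn : 0 < n) {c : ℝ}
    (h : ∀ x, c * ‖x‖ ^ 2 ≤ ‖toEuclideanLin M x‖ ^ 2) : c ≤ sigmaMin M ^ 2 := by
  obtain ⟨x, hx, hMx⟩ := exists_norm_eq_sigmaMin M hn
  simpa [hx, hMx] using h x

lemma sigmaMin_pos_of_rank_eq (hM : M.rank = n) : 0 < sigmaMin M := by
  rcases Nat.eq_zero_or_pos n with rfl | hn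
  · simp [sigmaMin]
  obtain ⟨x, hx, hMx⟩ := exists_norm_eq_sigmaMin M hn
  have hinj := mulVec_injective_of_rank_eq (hM.trans (Fintype.card_fin n).symm)
  refine hMx ▸ norm_pos_iff.mpr fun hMx0 => ?_
  have hx0 : WithLp.ofLp x = 0 := hinj <| by
    simpa [toLpLin_apply] using congrArg WithLp.ofLp hMx0
  simp [show x = 0 from WithLp.ofLp_injective 2 hx0] at hx

lemma one_le_kappa (hM : 0 < sigmaMin M) : 1 ≤ kappa M := by
  rcases Nat.eq_zero_or_pos n with rfl | hn
  · simp [kappa]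
  rw [kappa_eq_norm_div_sigmaMin M hn, one_le_div hM]
  exact sigmaMin_le_norm M hn

end SigmaMin

section CholeskyFactor

open Matrix

variable {m n : ℕ} {A₁ : Matrix (Fin m) (Fin n) ℝ} {R : Matrix (Fin n) (Fin n) ℝ}

lemma kappa_le_sqrt_div_of_forall_mul_norm_sq_le (hn : 0 < n) {U c : ℝ} (hc : 0 < c)
    (hU : ‖R‖ ^ 2 ≤ U) (h : ∀ x, c * ‖x‖ ^ 2 ≤ ‖toEuclideanLin R x‖ ^ 2) :
    kappa R ≤ √(U / c) := by
  have hcσ := le_sigmaMin_sq_of_forall_mul_norm_sq_le R hn h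
  refine Real.le_sqrt_of_sq_le ?_
  rw [kappa_eq_norm_div_sigmaMin R hn, div_pow]
  exact div_le_div₀ ((sq_nonneg _).trans hU) hU hc hcσ

theorem cholesky_factor_bounds {γ : ℝ} (hσ : 0 < sigmaMin A₁) (hγ : 0 ≤ γ)
    (hsmall : kappa A₁ ^ 2 * γ < 1) (hgram : ‖Rᵀ * R - A₁ᵀ * A₁‖ ≤ γ * ‖A₁‖ ^ 2) :
    IsUnit R.det ∧ ‖R‖ ^ 2 ≤ ‖A₁‖ ^ 2 * (1 + γ) ∧
      ‖R⁻¹‖ ^ 2 ≤ (sigmaMin A₁)⁻¹ ^ 2 / (1 - kappa A₁ ^ 2 * γ) ∧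
      kappa R ≤ kappa A₁ * √((1 + γ) / (1 - kappa A₁ ^ 2 * γ)) := by
  rcases Nat.eq_zero_or_pos n with rfl | hn
  · have hγ₁ : γ < 1 := by simpa [kappa] using hsmall
    have hupper : 0 ≤ ‖A₁‖ ^ 2 * (1 + γ) := by positivity
    have hratio : 1 ≤ (1 + γ) / (1 - γ) := (one_le_div (by linarith)).mpr (by linarith)
    obtain rfl : R = 0 := Subsingleton.elim R 0
    refine ⟨by simp, by simpa using hupper, ?_, ?_⟩
    · simp [sigmaMin, kappa, hγ₁.le]
    · simpa [kappa] using Real.one_le_sqrt.mpr hratio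
  set κ := kappa A₁
  set σ := sigmaMin A₁
  have hnorm : ‖A₁‖ = κ * σ := by
    rw [show κ = ‖A₁‖ / σ from kappa_eq_norm_div_sigmaMin A₁ hn, div_mul_cancel₀ _ hσ.ne']
  have hκ : 0 ≤ κ := zero_le_one.trans (one_le_kappa A₁ hσ)
  have hgap : 0 < 1 - κ ^ 2 * γ := sub_pos.mpr hsmall
  set c := σ ^ 2 * (1 - κ ^ 2 * γ)
  have hc : 0 < c := by positivity
  have hlow : ∀ x, c * ‖x‖ ^ 2 ≤ ‖toEuclideanLin R x‖ ^ 2 := fun x => by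
    have hA₁x := sigmaMin_sq_mul_le A₁ hn x
    have hRx := norm_sq_sub_le_of_norm_gram_sub_le hgram x
    rw [hnorm] at hRx
    linear_combination hA₁x + hRx
  have hup : ‖R‖ ^ 2 ≤ ‖A₁‖ ^ 2 * (1 + γ) := by
    linarith [norm_sq_le_of_norm_gram_sub_le hgram]
  refine ⟨isUnit_det_of_forall_mul_norm_sq_le hc hlow, hup, ?_, ?_⟩
  · calc ‖R⁻¹‖ ^ 2 ≤ c⁻¹ := norm_inv_sq_le_of_forall_mul_norm_sq_le hc hlow
      _ = σ⁻¹ ^ 2 / (1 - κ ^ 2 * γ) := by rw [mul_inv, inv_pow, div_eq_mul_inv]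
  · calc kappa R ≤ √(‖A₁‖ ^ 2 * (1 + γ) / c) :=
          kappa_le_sqrt_div_of_forall_mul_norm_sq_le hn hc hup hlow
      _ = κ * √((1 + γ) / (1 - κ ^ 2 * γ)) := by
        rw [hnorm, show (κ * σ) ^ 2 * (1 + γ) / c = κ ^ 2 * ((1 + γ) / (1 - κ ^ 2 * γ)) by
          simp only [c]; field_simp, Real.sqrt_mul (sq_nonneg κ), Real.sqrt_sq hκ]

end CholeskyFactor

/-- `(sigmaMin A₁)⁻¹` is the paper's `‖A₁†‖₂`, since `A₁` has full column rank. -/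
theorem stmt_12_general {m n : ℕ} (A E Es : Matrix (Fin m) (Fin n) ℝ)
    (Rs : Matrix (Fin n) (Fin n) ℝ)
    (hA : A.rank = n) (hRs : IsUnit Rs.det)
    (A₁ Ahat : Matrix (Fin m) (Fin n) ℝ)
    (hA₁ : A₁ = A * Rs⁻¹)
    (hAhat : Ahat = ((A + E) + Es) * Rs⁻¹)
    (E₁ E₂ Ghat Rhat₂ : Matrix (Fin n) (Fin n) ℝ)
    (hGhat : Ghat = Ahatᵀ * Ahat + E₁)
    (εA εs εF ε₁ ε₂ γ₂ : ℝ)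
    (hεA : εA = spec E / spec A)
    (hεs : εs = spec Es / (spec A₁ * spec Rs))
    (hεF : εF = (εA + εs) * (spec Rs * spec Rs⁻¹))
    (hε₁ : ε₁ = spec E₁ / spec Ahat ^ 2)
    (hε₂ : ε₂ = spec E₂ / spec Ghat)
    (hγ₂ : γ₂ = 2 * εF + εF ^ 2 + (1 + εF) ^ 2 * (ε₁ + (1 + ε₁) * ε₂))
    (hsmall : kappa A₁ ^ 2 * γ₂ < 1)
    (hchol : Ghat + E₂ = Rhat₂ᵀ * Rhat₂) :
    IsUnit Rhat₂.det ∧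
      spec Rhat₂ ^ 2 ≤ spec A₁ ^ 2 * (1 + γ₂) ∧
      spec Rhat₂⁻¹ ^ 2 ≤ ((sigmaMin A₁)⁻¹) ^ 2 / (1 - kappa A₁ ^ 2 * γ₂) ∧
      kappa Rhat₂ ≤ kappa A₁ * Real.sqrt ((1 + γ₂) / (1 - kappa A₁ ^ 2 * γ₂)) := by
  simp only [spec_eq_norm] at hεA hεs hεF hε₁ hε₂ ⊢
  have hσ : 0 < sigmaMin A₁ := sigmaMin_pos_of_rank_eq A₁ <| by
    rw [hA₁, Matrix.rank_mul_eq_left_of_isUnit_det _ _ (Matrix.isUnit_nonsing_inv_det Rs hRs), hA]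
  have hγ₀ : 0 ≤ γ₂ := by subst hγ₂ hε₁ hε₂ hεF hεA hεs; positivity
  have hγ₁ : γ₂ < 1 := by nlinarith [one_le_kappa A₁ hσ]
  have hgram : ‖Rhat₂ᵀ * Rhat₂ - A₁ᵀ * A₁‖ ≤ γ₂ * ‖A₁‖ ^ 2 := by
    rcases Nat.eq_zero_or_pos n with rfl | hn
    · rw [Subsingleton.elim (Rhat₂ᵀ * Rhat₂ - A₁ᵀ * A₁) 0, norm_zero]
      positivity
    · have hA₁0 : A₁ ≠ 0 := norm_pos_iff.mp (hσ.trans_le (sigmaMin_le_norm A₁ hn))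
      exact Matrix.norm_gram_sub_le_of_perturbed_cholQR hA₁0 hRs hA₁ hAhat hGhat hεA hεs hεF
        hε₁ hε₂ hγ₂ hγ₁ hchol
  exact cholesky_factor_bounds hσ hγ₀ hsmall hgram

/-- proof of Theorem 3.2, step 5: bounds on the computed Cholesky
factor `R̂₂`. Since `A₁` has full column rank, `‖A₁†‖₂ = 1/σₙ(A₁) = (sigmaMin A₁)⁻¹`. -/
theorem stmt_12 {m n : ℕ} (A E Es : Matrix (Fin m) (Fin n) ℝ)
    (Rs : Matrix (Fin n) (Fin n) ℝ)
    (hA : A.rank = n) (hRs : IsUnit Rs.det)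
    (A₁ Ahat : Matrix (Fin m) (Fin n) ℝ)
    (hA₁ : A₁ = A * Rs⁻¹)
    (hAhat : Ahat = ((A + E) + Es) * Rs⁻¹)
    (E₁ E₂ Ghat Rhat₂ : Matrix (Fin n) (Fin n) ℝ)
    (hE₁ : E₁ᵀ = E₁) (hE₂ : E₂ᵀ = E₂)
    (hGhat : Ghat = Ahatᵀ * Ahat + E₁)
    (εA εs εF ε₁ ε₂ γ₂ : ℝ)
    (hεA : εA = spec E / spec A)
    (hεs : εs = spec Es / (spec A₁ * spec Rs))
    (hεF : εF = (εA + εs) * (spec Rs * spec Rs⁻¹))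
    (hε₁ : ε₁ = spec E₁ / spec Ahat ^ 2)
    (hε₂ : ε₂ = spec E₂ / spec Ghat)
    (hγ₂ : γ₂ = 2 * εF + εF ^ 2 + (1 + εF) ^ 2 * (ε₁ + (1 + ε₁) * ε₂))
    (hsmall : kappa A₁ ^ 2 * γ₂ < 1)
    (hchol : Ghat + E₂ = Rhat₂ᵀ * Rhat₂) :
    IsUnit Rhat₂.det ∧
      spec Rhat₂ ^ 2 ≤ spec A₁ ^ 2 * (1 + γ₂) ∧
      spec Rhat₂⁻¹ ^ 2 ≤ ((sigmaMin A₁)⁻¹) ^ 2 / (1 - kappa A₁ ^ 2 * γ₂) ∧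
      kappa Rhat₂ ≤ kappa A₁ * Real.sqrt ((1 + γ₂) / (1 - kappa A₁ ^ 2 * γ₂)) :=
  stmt_12_general A E Es Rs hA hRs A₁ Ahat hA₁ hAhat E₁ E₂ Ghat Rhat₂ hGhat εA εs εF ε₁ ε₂ γ₂ hεA
    hεs hεF hε₁ hε₂ hγ₂ hsmall hchol
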